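/- arXiv:2108.01110 — 2 statements merged into one kernel-verified Lean document; each statement's English description precedes it below -/
import Mathlib

section
/- Let Ĥ = [e, H] ∈ ℝ^{N×(n+1)} where e is the all-ones vector in ℝ^N and H ∈ ℝ^{N×n}, and let μ = (1/N)H^T e be the column mean vector. Let U = [[1, -μ^T],[0, I_n]]. If Ĥ has full column rank, then the largest eigenvalue satisfies λ_max(U^T Ĥ^T Ĥ U) ≤ λ_max(Ĥ^T Ĥ). -/
open Matrix

/-- The set of eigenvalues of a real square matrix. -/
noncomputable def eigs {m : ℕ} (A : Matrix (Fin m) (Fin m) ℝ) : Set ℝ :=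
  {μ | ∃ v : Fin m → ℝ, v ≠ 0 ∧ A.mulVec v = μ • v}

noncomputable def lamMax {m : ℕ} (A : Matrix (Fin m) (Fin m) ℝ) : ℝ := sSup (eigs A)

/-- Ĥ = [e, H] : prepend a column of ones to H -/
noncomputable def hatM {N n : ℕ} (H : Matrix (Fin N) (Fin n) ℝ) :
    Matrix (Fin N) (Fin (n + 1)) ℝ :=
  Matrix.of fun i j => Fin.cases (motive := fun _ => ℝ) 1 (fun j' => H i j') j

/-- U = [[1, -μᵀ],[0, I]] : the centering transformation -/
noncomputable def centerU {n : ℕ} (μ : Fin n → ℝ) : Matrix (Fin (n + 1)) (Fin (n + 1)) ℝ :=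
  Matrix.of fun i j =>
    Fin.cases (motive := fun _ => ℝ)
      (Fin.cases (motive := fun _ => ℝ) 1 (fun j' => -μ j') j)
      (fun i' => Fin.cases (motive := fun _ => ℝ) 0 (fun j' => if i' = j' then 1 else 0) j) i

/-!
ĤU = [e, H_c] with H_c = H - eμᵀ, and the columns of H_c are orthogonal to e because μ is the
column mean. For x = (a, y), Pythagoras therefore gives ‖ĤUx‖² = N a² + ‖H_c y‖², and, since
Hy = H_c y + (μ ⬝ y) e, also ‖H_c y‖² ≤ ‖Hy‖². Now N a² = ‖Ĥ(a, 0)‖² and ‖Hy‖² = ‖Ĥ(0, y)‖², each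
bounded by λ_max(ĤᵀĤ) times the squared norm of its argument, so the quadratic form of UᵀĤᵀĤU is
bounded by λ_max(ĤᵀĤ)‖x‖², which bounds its largest eigenvalue.
-/

open scoped ComplexOrder

theorem Matrix.IsHermitian.posSemidef_smul_one_sub {ι 𝕜 : Type*} [Fintype ι] [DecidableEq ι]
    [RCLike 𝕜] {A : Matrix ι ι 𝕜} (hA : A.IsHermitian) {c : ℝ}
    (hc : ∀ i, hA.eigenvalues i ≤ c) : ((c : 𝕜) • 1 - A).PosSemidef := by
  have hdiag : (c : 𝕜) • 1 - A = Unitary.conjStarAlgAut 𝕜 _ hA.eigenvectorUnitary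
      (diagonal fun i => ((c - hA.eigenvalues i : ℝ) : 𝕜)) := by
    conv_lhs => rw [hA.spectral_theorem,
      ← map_one (Unitary.conjStarAlgAut 𝕜 _ hA.eigenvectorUnitary), ← map_smul, ← map_sub]
    congr 1
    ext i j
    by_cases h : i = j <;> simp [h, diagonal, Algebra.algebraMap_eq_smul_one, sub_smul]
  rw [hdiag, Unitary.conjStarAlgAut_apply,
    Unitary.isUnit_coe.posSemidef_star_right_conjugate_iff, posSemidef_diagonal_iff]
  exact fun i => by simpa using hc i

theorem Matrix.IsHermitian.dotProduct_mulVec_le {ι : Type*} [Fintype ι] [DecidableEq ι]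
    {A : Matrix ι ι ℝ} (hA : A.IsHermitian) {c : ℝ} (hc : ∀ i, hA.eigenvalues i ≤ c)
    (x : ι → ℝ) : x ⬝ᵥ A *ᵥ x ≤ c * (x ⬝ᵥ x) := by
  have hpsd := (hA.posSemidef_smul_one_sub hc).dotProduct_mulVec_nonneg x
  rw [star_trivial, sub_mulVec, dotProduct_sub, smul_mulVec, one_mulVec, dotProduct_smul] at hpsd
  simpa [sub_nonneg] using hpsd

theorem le_of_mem_eigs {m : ℕ} {A : Matrix (Fin m) (Fin m) ℝ} {μ c : ℝ} (hμ : μ ∈ eigs A)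
    (hA : ∀ x, x ⬝ᵥ A *ᵥ x ≤ c * (x ⬝ᵥ x)) : μ ≤ c := by
  obtain ⟨v, hv, hAv⟩ := hμ
  have hvv : 0 < v ⬝ᵥ v := by simpa using dotProduct_star_self_pos_iff.mpr hv
  have hle := hA v
  rw [hAv, dotProduct_smul, smul_eq_mul] at hle
  exact le_of_mul_le_mul_right hle hvv

theorem isHermitian_transpose_mul_self {m n : Type*} [Fintype m] (G : Matrix m n ℝ) :
    (Gᵀ * G).IsHermitian := by
  simpa using isHermitian_conjTranspose_mul_self G

theorem dotProduct_mulVec_transpose_mul_self {m n : Type*} [Fintype m] [Fintype n]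
    (G : Matrix m n ℝ) (x : n → ℝ) : x ⬝ᵥ (Gᵀ * G) *ᵥ x = G *ᵥ x ⬝ᵥ G *ᵥ x := by
  rw [← mulVec_mulVec, dotProduct_mulVec, vecMul_transpose]

theorem dotProduct_self_add_smul_of_dotProduct_eq_zero {ι : Type*} [Fintype ι] {u w : ι → ℝ}
    (h : u ⬝ᵥ w = 0) (s : ℝ) : (u + s • w) ⬝ᵥ (u + s • w) = u ⬝ᵥ u + s ^ 2 * (w ⬝ᵥ w) := by
  simp only [add_dotProduct, dotProduct_add, smul_dotProduct, dotProduct_smul, smul_eq_mul,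
    dotProduct_comm w u, h]
  ring

namespace Matrix.IsHermitian

variable {m : ℕ} [NeZero m] {A : Matrix (Fin m) (Fin m) ℝ}

theorem isGreatest_eigs (hA : A.IsHermitian) :
    IsGreatest (eigs A) (Finset.univ.sup' Finset.univ_nonempty hA.eigenvalues) := by
  have hle : ∀ i, hA.eigenvalues i ≤ Finset.univ.sup' Finset.univ_nonempty hA.eigenvalues :=
    fun i => Finset.le_sup' _ (Finset.mem_univ i)
  refine ⟨?_, fun μ hμ => le_of_mem_eigs hμ (hA.dotProduct_mulVec_le hle)⟩
  obtain ⟨i, -, hi⟩ := Finset.exists_mem_eq_sup' Finset.univ_nonempty hA.eigenvalues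
  rw [hi]
  exact ⟨_, fun h => hA.eigenvectorBasis.orthonormal.ne_zero i (by ext k; exact congrFun h k),
    hA.mulVec_eigenvectorBasis i⟩

theorem dotProduct_mulVec_le_lamMax (hA : A.IsHermitian) (x : Fin m → ℝ) :
    x ⬝ᵥ A *ᵥ x ≤ lamMax A * (x ⬝ᵥ x) := by
  rw [lamMax, hA.isGreatest_eigs.csSup_eq]
  exact hA.dotProduct_mulVec_le (fun i => Finset.le_sup' _ (Finset.mem_univ i)) x

theorem lamMax_le_of_dotProduct_mulVec_le (hA : A.IsHermitian) {c : ℝ}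
    (h : ∀ x, x ⬝ᵥ A *ᵥ x ≤ c * (x ⬝ᵥ x)) : lamMax A ≤ c := by
  rw [lamMax, hA.isGreatest_eigs.csSup_eq]
  exact le_of_mem_eigs hA.isGreatest_eigs.1 h

end Matrix.IsHermitian

section centering

variable {N n : ℕ}

theorem hatM_mulVec_cons (H : Matrix (Fin N) (Fin n) ℝ) (a : ℝ) (y : Fin n → ℝ) :
    hatM H *ᵥ Fin.cons a y = H *ᵥ y + a • 1 := by
  ext i
  simp [hatM, mulVec, dotProduct, Fin.sum_univ_succ, add_comm]

theorem hatM_mul_centerU (H : Matrix (Fin N) (Fin n) ℝ) (μ : Fin n → ℝ) :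
    hatM H * centerU μ = hatM (H - replicateRow (Fin N) μ) := by
  ext i j
  refine Fin.cases ?_ (fun j => ?_) j <;>
    simp [hatM, centerU, mul_apply, Fin.sum_univ_succ, sub_eq_neg_add]

theorem one_vecMul_sub_replicateRow {H : Matrix (Fin N) (Fin n) ℝ} {μ : Fin n → ℝ}
    (hμ : ∀ j, μ j = (1 / (N : ℝ)) * ∑ i, H i j) : 1 ᵥ* (H - replicateRow (Fin N) μ) = 0 := by
  ext j
  rcases eq_or_ne N 0 with rfl | hN
  · simp [vecMul]
  · simp [vecMul, dotProduct, hμ j, Finset.sum_sub_distrib, hN]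

theorem dotProduct_mulVec_centered_gram_le {H : Matrix (Fin N) (Fin n) ℝ} {μ : Fin n → ℝ}
    (hcenter : 1 ᵥ* (H - replicateRow (Fin N) μ) = 0) (a : ℝ) (y : Fin n → ℝ) :
    Fin.cons a y ⬝ᵥ ((hatM (H - replicateRow (Fin N) μ))ᵀ * hatM (H - replicateRow (Fin N) μ))
        *ᵥ Fin.cons a y ≤
      Fin.cons a 0 ⬝ᵥ ((hatM H)ᵀ * hatM H) *ᵥ Fin.cons a 0 +
        Fin.cons 0 y ⬝ᵥ ((hatM H)ᵀ * hatM H) *ᵥ Fin.cons 0 y := by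
  set Hc := H - replicateRow (Fin N) μ
  have horth : Hc *ᵥ y ⬝ᵥ 1 = 0 := by
    rw [dotProduct_comm, dotProduct_mulVec, hcenter, zero_dotProduct]
  have hsplit : H *ᵥ y = Hc *ᵥ y + (μ ⬝ᵥ y) • 1 := by
    ext i
    simp [Hc, sub_mulVec, replicateRow_mulVec_eq_const]
  simp only [dotProduct_mulVec_transpose_mul_self, hatM_mulVec_cons, mulVec_zero, zero_add,
    zero_smul, add_zero]
  rw [hsplit, dotProduct_self_add_smul_of_dotProduct_eq_zero horth,
    dotProduct_self_add_smul_of_dotProduct_eq_zero horth]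
  have hN : 0 ≤ (1 : Fin N → ℝ) ⬝ᵥ 1 := by simp
  simp only [smul_dotProduct, dotProduct_smul, smul_eq_mul]
  nlinarith [mul_nonneg (sq_nonneg (μ ⬝ᵥ y)) hN]

end centering

theorem stmt1_general {N n : ℕ} (H : Matrix (Fin N) (Fin n) ℝ)
    (μ : Fin n → ℝ) (hμ : ∀ j, μ j = (1 / (N : ℝ)) * ∑ i, H i j) :
    lamMax ((centerU μ)ᵀ * (hatM H)ᵀ * hatM H * centerU μ) ≤
      lamMax ((hatM H)ᵀ * hatM H) := by
  have hgram : (centerU μ)ᵀ * (hatM H)ᵀ * hatM H * centerU μ =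
      (hatM H * centerU μ)ᵀ * (hatM H * centerU μ) := by
    simp only [transpose_mul, Matrix.mul_assoc]
  have hA := isHermitian_transpose_mul_self (hatM H)
  rw [hgram, hatM_mul_centerU]
  refine (isHermitian_transpose_mul_self _).lamMax_le_of_dotProduct_mulVec_le fun x => ?_
  induction x using Fin.consCases with | cons a y => ?_
  calc _ ≤ _ := dotProduct_mulVec_centered_gram_le (one_vecMul_sub_replicateRow hμ) a y
    _ ≤ lamMax _ * (Fin.cons a 0 ⬝ᵥ Fin.cons a 0) + lamMax _ * (Fin.cons 0 y ⬝ᵥ Fin.cons 0 y) :=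
      add_le_add (hA.dotProduct_mulVec_le_lamMax _) (hA.dotProduct_mulVec_le_lamMax _)
    _ = lamMax _ * (Fin.cons a y ⬝ᵥ Fin.cons a y) := by
      simp only [dotProduct, Fin.sum_univ_succ, Fin.cons_zero, Fin.cons_succ, Pi.zero_apply,
        mul_zero, Finset.sum_const_zero]
      ring

theorem stmt1 {N n : ℕ} (H : Matrix (Fin N) (Fin n) ℝ)
    (μ : Fin n → ℝ) (hμ : ∀ j, μ j = (1 / (N : ℝ)) * ∑ i, H i j)
    (hrank : (hatM H).rank = n + 1) :
    lamMax ((centerU μ)ᵀ * (hatM H)ᵀ * hatM H * centerU μ) ≤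
      lamMax ((hatM H)ᵀ * hatM H) :=
  stmt1_general H μ hμ
end

section
/- Let Ĥ = [e, H] ∈ ℝ^{N×(n+1)} with full column rank, μ = (1/N)H^T e, and U = [[1, -μ^T],[0, I_n]]. Then κ(ĤU) ≤ κ(Ĥ), where κ denotes the 2-norm condition number σ_max/σ_min (smallest singular value, which is nonzero since Ĥ and hence ĤU has full column rank). -/
open Matrix

noncomputable def lamMin {m : ℕ} (A : Matrix (Fin m) (Fin m) ℝ) : ℝ := sInf (eigs A)

/-- 2-norm condition number σ_max/σ_min of a full column rank matrix -/
noncomputable def condFull {m n : ℕ} (A : Matrix (Fin m) (Fin n) ℝ) : ℝ :=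
  Real.sqrt (lamMax (Aᵀ * A) / lamMin (Aᵀ * A))

/-! Write `v = (t, x)` and `s = μ ⬝ᵥ x`. Since the columns of `H - e μᵀ` are orthogonal to `e`,
`‖Ĥ U v‖² = N t² + ‖Ĥ (-s, x)‖² = N t² - N s² + ‖Ĥ (0, x)‖²`, and `‖Ĥ (1, 0)‖² = N`.
So every Rayleigh quotient `‖Ĥ U v‖² / ‖v‖²` lies between the extreme Rayleigh quotients
`λ_min ≤ N ≤ λ_max` of `ĤᵀĤ`; hence so do the extreme eigenvalues of `(ĤU)ᵀ(ĤU)`, and the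
ratio `λ_max / λ_min` can only shrink. -/

namespace Matrix

variable {m : ℕ}

theorem eigs_eq_spectrum (A : Matrix (Fin m) (Fin m) ℝ) : eigs A = spectrum ℝ A := by
  ext c
  rw [← spectrum_toLin', ← Module.End.hasEigenvalue_iff_mem_spectrum, Module.End.hasEigenvalue_iff,
    Submodule.ne_bot_iff]
  simp [eigs, and_comm]

theorem eigs_finite (A : Matrix (Fin m) (Fin m) ℝ) : (eigs A).Finite := by
  rw [eigs_eq_spectrum]
  exact finite_real_spectrum

theorem IsHermitian.eigs_nonempty [NeZero m] {A : Matrix (Fin m) (Fin m) ℝ} (hA : A.IsHermitian) :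
    (eigs A).Nonempty := by
  rw [eigs_eq_spectrum, hA.spectrum_real_eq_range_eigenvalues]
  exact Set.range_nonempty _

theorem IsHermitian.lamMin_le_lamMax [NeZero m] {A : Matrix (Fin m) (Fin m) ℝ}
    (hA : A.IsHermitian) : lamMin A ≤ lamMax A :=
  csInf_le_csSup hA.eigs_nonempty (eigs_finite A).bddBelow (eigs_finite A).bddAbove

theorem PosDef.lamMin_pos [NeZero m] {A : Matrix (Fin m) (Fin m) ℝ} (hA : A.PosDef) :
    0 < lamMin A := by
  obtain ⟨v, hv, hAv⟩ := hA.isHermitian.eigs_nonempty.csInf_mem (eigs_finite A)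
  have hquad := hA.dotProduct_mulVec_pos hv
  rw [star_trivial, hAv, dotProduct_smul, smul_eq_mul] at hquad
  exact pos_of_mul_pos_left hquad (dotProduct_self_star_nonneg v)

theorem IsHermitian.lamMin_mul_dotProduct_self_le {A : Matrix (Fin m) (Fin m) ℝ}
    (hA : A.IsHermitian) (v : Fin m → ℝ) : lamMin A * (v ⬝ᵥ v) ≤ v ⬝ᵥ (A *ᵥ v) := by
  have hle : ∀ x ∈ spectrum ℝ A, lamMin A ≤ x := fun x hx =>
    csInf_le (eigs_finite A).bddBelow (by rwa [eigs_eq_spectrum])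
  open scoped MatrixOrder in
  have := le_iff.mp ((algebraMap_le_iff_le_spectrum hA).2 hle) |>.dotProduct_mulVec_nonneg v
  simpa [sub_mulVec, Algebra.algebraMap_eq_smul_one, smul_mulVec, dotProduct_smul] using this

theorem IsHermitian.dotProduct_mulVec_le_lamMax_mul {A : Matrix (Fin m) (Fin m) ℝ}
    (hA : A.IsHermitian) (v : Fin m → ℝ) : v ⬝ᵥ (A *ᵥ v) ≤ lamMax A * (v ⬝ᵥ v) := by
  have hle : ∀ x ∈ spectrum ℝ A, x ≤ lamMax A := fun x hx =>
    le_csSup (eigs_finite A).bddAbove (by rwa [eigs_eq_spectrum])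
  open scoped MatrixOrder in
  have := le_iff.mp ((le_algebraMap_iff_spectrum_le hA).2 hle) |>.dotProduct_mulVec_nonneg v
  simpa [sub_mulVec, Algebra.algebraMap_eq_smul_one, smul_mulVec, dotProduct_smul] using this

theorem IsHermitian.le_lamMin_of_forall [NeZero m] {A : Matrix (Fin m) (Fin m) ℝ}
    (hA : A.IsHermitian) {c : ℝ} (h : ∀ v, c * (v ⬝ᵥ v) ≤ v ⬝ᵥ (A *ᵥ v)) : c ≤ lamMin A := by
  refine le_csInf hA.eigs_nonempty fun x ⟨v, hv, hAv⟩ => ?_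
  have hcv := h v
  rw [hAv, dotProduct_smul, smul_eq_mul] at hcv
  exact le_of_mul_le_mul_right hcv (dotProduct_self_star_pos_iff.2 hv)

theorem IsHermitian.lamMax_le_of_forall [NeZero m] {A : Matrix (Fin m) (Fin m) ℝ}
    (hA : A.IsHermitian) {c : ℝ} (h : ∀ v, v ⬝ᵥ (A *ᵥ v) ≤ c * (v ⬝ᵥ v)) : lamMax A ≤ c := by
  refine csSup_le hA.eigs_nonempty fun x ⟨v, hv, hAv⟩ => ?_
  have hcv := h v
  rw [hAv, dotProduct_smul, smul_eq_mul] at hcv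
  exact le_of_mul_le_mul_right hcv (dotProduct_self_star_pos_iff.2 hv)

theorem mulVec_injective_of_rank_eq_card {K ι κ : Type*} [Field K] [Fintype ι] [Fintype κ]
    (A : Matrix ι κ K) (h : A.rank = Fintype.card κ) : Function.Injective A.mulVec := by
  have hdim := LinearMap.finrank_range_add_finrank_ker A.mulVecLin
  rw [← rank, h, Module.finrank_fintype_fun_eq_card] at hdim
  exact LinearMap.ker_eq_bot.mp (Submodule.finrank_eq_zero.mp
    (by omega : Module.finrank K (LinearMap.ker A.mulVecLin) = 0))

variable {p : ℕ}

theorem isHermitian_transpose_mul_self (A : Matrix (Fin p) (Fin m) ℝ) : (Aᵀ * A).IsHermitian := by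
  simpa using isHermitian_conjTranspose_mul_self A

theorem posDef_transpose_mul_self {A : Matrix (Fin p) (Fin m) ℝ}
    (hA : Function.Injective A.mulVec) : (Aᵀ * A).PosDef := by
  simpa using PosDef.conjTranspose_mul_self A hA

theorem dotProduct_transpose_mul_self_mulVec (A : Matrix (Fin p) (Fin m) ℝ) (v : Fin m → ℝ) :
    v ⬝ᵥ ((Aᵀ * A) *ᵥ v) = (A *ᵥ v) ⬝ᵥ (A *ᵥ v) := by
  rw [← mulVec_mulVec, dotProduct_mulVec, vecMul_transpose]

theorem lamMin_mul_le_mulVec_dotProduct_mulVec (A : Matrix (Fin p) (Fin m) ℝ) (v : Fin m → ℝ) :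
    lamMin (Aᵀ * A) * (v ⬝ᵥ v) ≤ (A *ᵥ v) ⬝ᵥ (A *ᵥ v) := by
  simpa only [dotProduct_transpose_mul_self_mulVec] using
    (isHermitian_transpose_mul_self A).lamMin_mul_dotProduct_self_le v

theorem mulVec_dotProduct_mulVec_le_lamMax_mul (A : Matrix (Fin p) (Fin m) ℝ) (v : Fin m → ℝ) :
    (A *ᵥ v) ⬝ᵥ (A *ᵥ v) ≤ lamMax (Aᵀ * A) * (v ⬝ᵥ v) := by
  simpa only [dotProduct_transpose_mul_self_mulVec] using
    (isHermitian_transpose_mul_self A).dotProduct_mulVec_le_lamMax_mul v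

theorem condFull_le_of_mulVec_bounds [NeZero m] {q k : ℕ} [NeZero k]
    {A : Matrix (Fin p) (Fin m) ℝ} (A' : Matrix (Fin q) (Fin k) ℝ)
    (hA : Function.Injective A.mulVec)
    (hlo : ∀ v, lamMin (Aᵀ * A) * (v ⬝ᵥ v) ≤ (A' *ᵥ v) ⬝ᵥ (A' *ᵥ v))
    (hhi : ∀ v, (A' *ᵥ v) ⬝ᵥ (A' *ᵥ v) ≤ lamMax (Aᵀ * A) * (v ⬝ᵥ v)) :
    condFull A' ≤ condFull A := by
  have hA' := isHermitian_transpose_mul_self A'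
  have hmin := hA'.le_lamMin_of_forall fun v => by
    simpa only [dotProduct_transpose_mul_self_mulVec] using hlo v
  have hmax := hA'.lamMax_le_of_forall fun v => by
    simpa only [dotProduct_transpose_mul_self_mulVec] using hhi v
  have hpos := (posDef_transpose_mul_self hA).lamMin_pos
  have hmax_nonneg := hpos.le.trans (isHermitian_transpose_mul_self A).lamMin_le_lamMax
  exact Real.sqrt_le_sqrt (div_le_div₀ hmax_nonneg hmax hpos hmin)

end Matrix

open Matrix

section Centering

variable {N n : ℕ} (H : Matrix (Fin N) (Fin n) ℝ)

theorem hatM_mulVec_cons_s3 (t : ℝ) (x : Fin n → ℝ) :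
    hatM H *ᵥ vecCons t x = fun i => t + (H *ᵥ x) i := by
  ext i
  simp [hatM, mulVec, dotProduct, Fin.sum_univ_succ]

theorem centerU_mulVec_cons (μ : Fin n → ℝ) (t : ℝ) (x : Fin n → ℝ) :
    centerU μ *ᵥ vecCons t x = vecCons (t - μ ⬝ᵥ x) x := by
  ext i
  refine Fin.cases ?_ (fun j => ?_) i
  · simp [centerU, mulVec, dotProduct, Fin.sum_univ_succ, sub_eq_add_neg]
  · simp [centerU, mulVec, dotProduct, Fin.sum_univ_succ]

variable {μ : Fin n → ℝ} (hμ : ∀ j, μ j = (1 / (N : ℝ)) * ∑ i, H i j)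
include hμ

theorem sum_mulVec_eq_mul_dotProduct (x : Fin n → ℝ) :
    ∑ i, (H *ᵥ x) i = N * (μ ⬝ᵥ x) := by
  rcases Nat.eq_zero_or_pos N with rfl | hN
  · simp
  have hcol : ∀ j, ∑ i, H i j = N * μ j := fun j => by
    rw [hμ]
    field_simp
  simp only [mulVec, dotProduct, Finset.mul_sum]
  rw [Finset.sum_comm]
  refine Finset.sum_congr rfl fun j _ => ?_
  rw [← Finset.sum_mul, hcol, mul_assoc]

theorem hatM_mulVec_cons_dotProduct_self (t : ℝ) (x : Fin n → ℝ) :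
    (hatM H *ᵥ vecCons t x) ⬝ᵥ (hatM H *ᵥ vecCons t x)
      = N * t ^ 2 + 2 * N * t * (μ ⬝ᵥ x) + (H *ᵥ x) ⬝ᵥ (H *ᵥ x) := by
  have hsum := sum_mulVec_eq_mul_dotProduct H hμ x
  rw [hatM_mulVec_cons_s3]
  simp only [dotProduct, add_mul_self_eq, Finset.sum_add_distrib, Finset.sum_const,
    Finset.card_univ, Fintype.card_fin, nsmul_eq_mul, ← Finset.mul_sum] at hsum ⊢
  rw [hsum]
  ring

theorem le_hatM_mul_centerU_mulVec_dotProduct_self {b : ℝ} (hb : 0 ≤ b)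
    (hlo : ∀ w, b * (w ⬝ᵥ w) ≤ (hatM H *ᵥ w) ⬝ᵥ (hatM H *ᵥ w)) (v : Fin (n + 1) → ℝ) :
    b * (v ⬝ᵥ v) ≤ ((hatM H * centerU μ) *ᵥ v) ⬝ᵥ ((hatM H * centerU μ) *ᵥ v) := by
  rw [← cons_head_tail v]
  set s := μ ⬝ᵥ vecTail v
  have hN := hlo (vecCons 1 0)
  have hx := hlo (vecCons (-s) (vecTail v))
  simp only [← mulVec_mulVec, centerU_mulVec_cons, hatM_mulVec_cons_dotProduct_self H hμ,
    cons_dotProduct_cons, dotProduct_zero, mulVec_zero] at hN hx ⊢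
  nlinarith [mul_le_mul_of_nonneg_right hN (sq_nonneg (vecHead v)), mul_nonneg hb (sq_nonneg s)]

theorem hatM_mul_centerU_mulVec_dotProduct_self_le {a : ℝ}
    (hhi : ∀ w, (hatM H *ᵥ w) ⬝ᵥ (hatM H *ᵥ w) ≤ a * (w ⬝ᵥ w)) (v : Fin (n + 1) → ℝ) :
    ((hatM H * centerU μ) *ᵥ v) ⬝ᵥ ((hatM H * centerU μ) *ᵥ v) ≤ a * (v ⬝ᵥ v) := by
  rw [← cons_head_tail v]
  set s := μ ⬝ᵥ vecTail v
  have hN := hhi (vecCons 1 0)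
  have hx := hhi (vecCons 0 (vecTail v))
  simp only [← mulVec_mulVec, centerU_mulVec_cons, hatM_mulVec_cons_dotProduct_self H hμ,
    cons_dotProduct_cons, dotProduct_zero, mulVec_zero] at hN hx ⊢
  nlinarith [mul_le_mul_of_nonneg_right hN (sq_nonneg (vecHead v)),
    mul_nonneg (Nat.cast_nonneg N : (0 : ℝ) ≤ N) (sq_nonneg s)]

end Centering

theorem stmt3 {N n : ℕ} (H : Matrix (Fin N) (Fin n) ℝ)
    (μ : Fin n → ℝ) (hμ : ∀ j, μ j = (1 / (N : ℝ)) * ∑ i, H i j)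
    (hrank : (hatM H).rank = n + 1) :
    condFull (hatM H * centerU μ) ≤ condFull (hatM H) := by
  have hinj : Function.Injective (hatM H).mulVec :=
    mulVec_injective_of_rank_eq_card _ (by rw [hrank, Fintype.card_fin])
  have hpos := (posDef_transpose_mul_self hinj).lamMin_pos
  exact condFull_le_of_mulVec_bounds _ hinj
    (le_hatM_mul_centerU_mulVec_dotProduct_self H hμ hpos.le
      (lamMin_mul_le_mulVec_dotProduct_mulVec _))
    (hatM_mul_centerU_mulVec_dotProduct_self_le H hμ (mulVec_dotProduct_mulVec_le_lamMax_mul _))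
end
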